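/- Fix n ≥ 3, m ≥ 1, k ∈ {1,...,n-1}, β > 0 with β² < 4·4^m sin^{2m}(πk/n). Set λ = -4^m sin^{2m}(πk/n) and γ = √(-λ - β²/4). Then for any c₁, c₂ ∈ ℂ, the function X(t) = e^{-βt/2}(c₁ cos(γt) + c₂ sin(γt))·P_k solves X'' + βX' = (-1)^{m+1}M^m X for all t ∈ ℝ, and X(t) → 0 as t → ∞. -/

import Mathlib

/-- The discrete Laplacian circulant matrix `circ(-2,1,0,…,0,1)` over `ℂ`. -/
noncomputable def lapM (n : ℕ) [NeZero n] : Matrix (Fin n) (Fin n) ℂ :=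
  Matrix.of fun i j =>
    (if j = i + 1 then 1 else 0) + (if j = i - 1 then 1 else 0) + (if j = i then -2 else 0)

/-- The basis polygon `P_k = (1, ω^k, …, ω^{(n-1)k})` with `ω = e^{2πi/n}`. -/
noncomputable def Pvec (n k : ℕ) : Fin n → ℂ :=
  fun j => Complex.exp (2 * (Real.pi : ℂ) * Complex.I * (k : ℂ) * ((j : ℕ) : ℂ) / (n : ℂ))

/-!
The vector `P_k` is an eigenvector of `M`: since `ω^k` is an `n`-th root of unity,
`M P_k = (ω^k + ω^{-k} - 2) P_k = -4 sin²(πk/n) P_k`, so `(-1)^{m+1} M^m P_k = λ P_k`.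
The vector equation therefore reduces to the scalar equation `f'' + β f' = λ f` for
`f(t) = e^{-βt/2}(c₁ cos γt + c₂ sin γt)`. Differentiation maps this family to itself, acting on
the coefficient pair `(c₁, c₂)` as `-β/2 + γ J` with `J² = -1`, hence `D² + β D = -(β²/4 + γ²) = λ`.
Decay follows from `|f(t)| ≤ (|c₁| + |c₂|) e^{-βt/2}`.
-/

open Complex Filter Topology Matrix

lemma lapM_mulVec_apply (n : ℕ) [NeZero n] (v : Fin n → ℂ) (i : Fin n) :
    (lapM n *ᵥ v) i = v (i + 1) + v (i - 1) - 2 * v i := by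
  simp only [Matrix.mulVec, dotProduct, lapM, Matrix.of_apply, add_mul, ite_mul, one_mul,
    zero_mul, Finset.sum_add_distrib, Finset.sum_ite_eq', Finset.mem_univ, if_true]
  ring

lemma pow_val_add_of_pow_eq_one {n : ℕ} [NeZero n] {ω : ℂ} (hω : ω ^ n = 1) (i j : Fin n) :
    ω ^ ((i + j : Fin n) : ℕ) = ω ^ (i : ℕ) * ω ^ (j : ℕ) := by
  rw [Fin.val_add, ← pow_eq_pow_mod _ hω, pow_add]

lemma lapM_mulVec_pow_val_of_pow_eq_one {n : ℕ} [NeZero n] {ω : ℂ} (hω : ω ^ n = 1) :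
    lapM n *ᵥ (fun j : Fin n => ω ^ (j : ℕ)) = (ω + ω⁻¹ - 2) • fun j : Fin n => ω ^ (j : ℕ) := by
  have h_one : ω ^ ((1 : Fin n) : ℕ) = ω := by
    rw [Fin.val_one', ← pow_eq_pow_mod _ hω, pow_one]
  have h_neg_one : ω ^ ((-1 : Fin n) : ℕ) = ω⁻¹ := by
    have h := pow_val_add_of_pow_eq_one hω (-1) 1
    rw [neg_add_cancel, Fin.val_zero, pow_zero, h_one] at h
    exact eq_inv_of_mul_eq_one_left h.symm
  ext i
  rw [lapM_mulVec_apply, sub_eq_add_neg i, pow_val_add_of_pow_eq_one hω,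
    pow_val_add_of_pow_eq_one hω, h_one, h_neg_one, Pi.smul_apply, smul_eq_mul]
  ring

lemma exp_mul_I_add_inv_sub_two (θ : ℝ) :
    exp (θ * I) + (exp (θ * I))⁻¹ - 2 = ((-4 * Real.sin (θ / 2) ^ 2 : ℝ) : ℂ) := by
  rw [← exp_neg, ← neg_mul, ← two_cos]
  have h_cos : Real.cos θ = 1 - 2 * Real.sin (θ / 2) ^ 2 := by
    rw [← Real.cos_two_mul_eq_one_sub, mul_div_cancel₀ θ two_ne_zero]
  rw [← ofReal_cos, h_cos]
  push_cast
  ring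

lemma Pvec_eq_pow_val (n k : ℕ) :
    Pvec n k = fun j : Fin n => exp ((2 * Real.pi * k / n : ℝ) * I) ^ (j : ℕ) := by
  ext j
  rw [Pvec, ← exp_nat_mul]
  push_cast
  congr 1
  ring

lemma exp_two_pi_mul_div_mul_I_pow_self (n k : ℕ) [NeZero n] :
    exp ((2 * Real.pi * k / n : ℝ) * I) ^ n = 1 := by
  rw [← exp_nat_mul]
  have hn : (n : ℂ) ≠ 0 := Nat.cast_ne_zero.mpr (NeZero.ne n)
  have : (n : ℂ) * ((2 * Real.pi * k / n : ℝ) * I) = k * (2 * Real.pi * I) := by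
    push_cast; field_simp
  rw [this, exp_nat_mul_two_pi_mul_I]

lemma lapM_mulVec_Pvec (n k : ℕ) [NeZero n] :
    lapM n *ᵥ Pvec n k = ((-4 * Real.sin (Real.pi * k / n) ^ 2 : ℝ) : ℂ) • Pvec n k := by
  rw [Pvec_eq_pow_val, lapM_mulVec_pow_val_of_pow_eq_one (exp_two_pi_mul_div_mul_I_pow_self n k),
    exp_mul_I_add_inv_sub_two, show 2 * Real.pi * k / n / 2 = Real.pi * k / n by ring]

lemma Matrix.pow_mulVec_of_mulVec_eq_smul {ι R : Type*} [Fintype ι] [DecidableEq ι]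
    [CommSemiring R]
    {A : Matrix ι ι R} {v : ι → R} {μ : R} (h : A *ᵥ v = μ • v) (m : ℕ) :
    (A ^ m) *ᵥ v = μ ^ m • v := by
  induction m with
  | zero => simp
  | succ m ih =>
    rw [pow_succ, ← mulVec_mulVec, h, mulVec_smul, ih, smul_smul, pow_succ']

noncomputable def dampedOsc (β γ : ℝ) (c₁ c₂ : ℂ) (t : ℝ) : ℂ :=
  exp (-(β : ℂ) * t / 2) * (c₁ * Real.cos (γ * t) + c₂ * Real.sin (γ * t))

section dampedOsc

variable (β γ : ℝ) (c₁ c₂ : ℂ)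

lemma hasDerivAt_dampedOsc (t : ℝ) :
    HasDerivAt (dampedOsc β γ c₁ c₂)
      (dampedOsc β γ (-β / 2 * c₁ + γ * c₂) (-γ * c₁ - β / 2 * c₂) t) t := by
  have h_exp : HasDerivAt (fun t : ℝ => exp (-(β : ℂ) * t / 2))
      (exp (-(β : ℂ) * t / 2) * (-β / 2)) t := by
    have h_arg : HasDerivAt (fun t : ℝ => -(β : ℂ) * t / 2) (-β / 2) t := by
      simpa using (((hasDerivAt_id t).ofReal_comp).const_mul (-(β : ℂ))).div_const 2
    exact h_arg.cexp
  have h_lin : HasDerivAt (fun t : ℝ => γ * t) γ t := by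
    simpa using (hasDerivAt_id t).const_mul γ
  have h_cos := h_lin.cos.ofReal_comp
  have h_sin := h_lin.sin.ofReal_comp
  refine (h_exp.mul ((h_cos.const_mul c₁).add (h_sin.const_mul c₂))).congr_deriv ?_
  simp only [dampedOsc, Pi.add_apply]
  push_cast
  ring

lemma deriv_dampedOsc :
    deriv (dampedOsc β γ c₁ c₂) = dampedOsc β γ (-β / 2 * c₁ + γ * c₂) (-γ * c₁ - β / 2 * c₂) :=
  funext fun t => (hasDerivAt_dampedOsc β γ c₁ c₂ t).deriv

lemma deriv_dampedOsc_smul {E : Type*} [NormedAddCommGroup E] [NormedSpace ℂ E] (v : E) :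
    deriv (fun t => dampedOsc β γ c₁ c₂ t • v)
      = fun t => dampedOsc β γ (-β / 2 * c₁ + γ * c₂) (-γ * c₁ - β / 2 * c₂) t • v :=
  funext fun t => ((hasDerivAt_dampedOsc β γ c₁ c₂ t).smul_const v).deriv

lemma deriv_deriv_add_smul_deriv_dampedOsc {lam : ℝ} (hγ : γ ^ 2 = -lam - β ^ 2 / 4) (t : ℝ) :
    deriv (deriv (dampedOsc β γ c₁ c₂)) t + β * deriv (dampedOsc β γ c₁ c₂) t
      = lam * dampedOsc β γ c₁ c₂ t := by
  have hγC : (γ : ℂ) ^ 2 = -lam - (β : ℂ) ^ 2 / 4 := by exact_mod_cast hγ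
  simp only [deriv_dampedOsc, dampedOsc]
  linear_combination
    (-exp (-(β : ℂ) * t / 2) * (c₁ * Real.cos (γ * t) + c₂ * Real.sin (γ * t))) * hγC

lemma norm_dampedOsc_le (t : ℝ) :
    ‖dampedOsc β γ c₁ c₂ t‖ ≤ (‖c₁‖ + ‖c₂‖) * Real.exp (-(β / 2) * t) := by
  have h_exp : ‖exp (-(β : ℂ) * t / 2)‖ = Real.exp (-(β / 2) * t) := by
    rw [norm_exp]
    simp only [neg_mul, div_ofNat_re, neg_re, mul_re, ofReal_re, ofReal_im, mul_zero, sub_zero]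
    ring_nf
  have h_trig : ‖c₁ * Real.cos (γ * t) + c₂ * Real.sin (γ * t)‖ ≤ ‖c₁‖ + ‖c₂‖ := by
    refine (norm_add_le _ _).trans (add_le_add ?_ ?_) <;>
      rw [norm_mul, norm_real, Real.norm_eq_abs] <;>
      exact mul_le_of_le_one_right (norm_nonneg _)
        (by simp [Real.abs_cos_le_one, Real.abs_sin_le_one])
  rw [dampedOsc, norm_mul, h_exp, mul_comm]
  gcongr

lemma tendsto_dampedOsc_atTop (hβ : 0 < β) :
    Tendsto (dampedOsc β γ c₁ c₂) atTop (𝓝 0) := by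
  have h_exp : Tendsto (fun t => Real.exp (-(β / 2) * t)) atTop (𝓝 0) :=
    Real.tendsto_exp_atBot.comp (tendsto_id.const_mul_atTop_of_neg (by linarith))
  refine squeeze_zero_norm (norm_dampedOsc_le β γ c₁ c₂) ?_
  simpa using h_exp.const_mul (‖c₁‖ + ‖c₂‖)

end dampedOsc

lemma deriv_deriv_add_smul_deriv_dampedOsc_smul {ι : Type*} [Fintype ι] {A : Matrix ι ι ℂ}
    {v : ι → ℂ} {lam β γ : ℝ} (hv : A *ᵥ v = (lam : ℂ) • v) (hγ : γ ^ 2 = -lam - β ^ 2 / 4)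
    (c₁ c₂ : ℂ) (t : ℝ) :
    deriv (deriv fun t => dampedOsc β γ c₁ c₂ t • v) t
        + β • deriv (fun t => dampedOsc β γ c₁ c₂ t • v) t
      = A *ᵥ (dampedOsc β γ c₁ c₂ t • v) := by
  have h_scalar := deriv_deriv_add_smul_deriv_dampedOsc β γ c₁ c₂ hγ t
  simp only [deriv_dampedOsc] at h_scalar
  rw [deriv_dampedOsc_smul, deriv_dampedOsc_smul, mulVec_smul, hv, smul_smul,
    mul_comm (dampedOsc β γ c₁ c₂ t), ← h_scalar, add_smul, mul_smul, Complex.coe_smul]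

lemma neg_one_pow_smul_lapM_pow_mulVec_Pvec (n m k : ℕ) [NeZero n] :
    ((-1 : ℂ) ^ (m + 1) • lapM n ^ m) *ᵥ Pvec n k
      = ((-(4 : ℝ) ^ m * Real.sin (Real.pi * k / n) ^ (2 * m) : ℝ) : ℂ) • Pvec n k := by
  rw [smul_mulVec, pow_mulVec_of_mulVec_eq_smul (lapM_mulVec_Pvec n k), smul_smul]
  congr 1
  push_cast
  rw [neg_mul, neg_pow (4 * _), ← mul_assoc, ← pow_add, Odd.neg_one_pow ⟨m, by ring⟩, mul_pow,
    ← pow_mul]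
  ring

theorem underdamped_mode_solution_general (n m k : ℕ) [NeZero n] (β : ℝ) (hβ : 0 < β)
    (hβ2 : β ^ 2 < 4 * ((4 : ℝ) ^ m * Real.sin (Real.pi * k / n) ^ (2 * m)))
    (c₁ c₂ : ℂ) (lam γ : ℝ)
    (hlam : lam = -(4 : ℝ) ^ m * Real.sin (Real.pi * k / n) ^ (2 * m))
    (hγ : γ = Real.sqrt (-lam - β ^ 2 / 4))
    (X : ℝ → Fin n → ℂ)
    (hX : ∀ t : ℝ, X t
      = (Complex.exp (-(β : ℂ) * t / 2) * (c₁ * Real.cos (γ * t) + c₂ * Real.sin (γ * t)))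
          • Pvec n k) :
    (∀ t : ℝ, deriv (deriv X) t + β • deriv X t
        = ((-1 : ℂ) ^ (m + 1) • (lapM n) ^ m).mulVec (X t)) ∧
      Filter.Tendsto X Filter.atTop (nhds 0) := by
  have hX_eq : X = fun t => dampedOsc β γ c₁ c₂ t • Pvec n k := funext hX
  have hγ_sq : γ ^ 2 = -lam - β ^ 2 / 4 := by
    rw [hγ, Real.sq_sqrt]
    linarith
  subst hX_eq hlam
  refine ⟨deriv_deriv_add_smul_deriv_dampedOsc_smul
    (neg_one_pow_smul_lapM_pow_mulVec_Pvec n m k) hγ_sq c₁ c₂, ?_⟩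
  simpa using (tendsto_dampedOsc_atTop β γ c₁ c₂ hβ).smul_const (Pvec n k)

/-- Underdamped mode solutions: with `λ = -4^m sin^{2m}(πk/n)`, `β² < -4λ` and
`γ = √(-λ - β²/4)`, `X(t) = e^{-βt/2}(c₁ cos(γt) + c₂ sin(γt)) • P_k` solves
`X'' + βX' = (-1)^{m+1} M^m X` and `X(t) → 0` as `t → ∞`. -/
theorem underdamped_mode_solution (n m k : ℕ) [NeZero n] (hn : 3 ≤ n) (hm : 1 ≤ m)
    (hk1 : 1 ≤ k) (hkn : k < n) (β : ℝ) (hβ : 0 < β)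
    (hβ2 : β ^ 2 < 4 * ((4 : ℝ) ^ m * Real.sin (Real.pi * k / n) ^ (2 * m)))
    (c₁ c₂ : ℂ) (lam γ : ℝ)
    (hlam : lam = -(4 : ℝ) ^ m * Real.sin (Real.pi * k / n) ^ (2 * m))
    (hγ : γ = Real.sqrt (-lam - β ^ 2 / 4))
    (X : ℝ → Fin n → ℂ)
    (hX : ∀ t : ℝ, X t
      = (Complex.exp (-(β : ℂ) * t / 2) * (c₁ * Real.cos (γ * t) + c₂ * Real.sin (γ * t)))
          • Pvec n k) :
    (∀ t : ℝ, deriv (deriv X) t + β • deriv X t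
        = ((-1 : ℂ) ^ (m + 1) • (lapM n) ^ m).mulVec (X t)) ∧
      Filter.Tendsto X Filter.atTop (nhds 0) :=
  underdamped_mode_solution_general n m k β hβ hβ2 c₁ c₂ lam γ hlam hγ X hX
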